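/- arXiv:1901.02600 — 3 statements merged into one kernel-verified Lean document; each statement's English description precedes it below -/
import Mathlib

section
/- Let A₀ be a q×q real matrix and ω : [0,∞) → ℝ^q continuously differentiable with ω(0) = ω₀. If lim_{t→∞} (e^{A₀t}ω₀ − ω(t)) = 0 and the function t ↦ A₀e^{A₀t}ω₀ − ω̇(t) is uniformly continuous on [0,∞), then lim_{t→∞} (A₀ω(t) − ω̇(t)) = 0. -/
/-! With `g t = e^{tA₀} ω₀ - ω t`, whose derivative is `A₀ e^{tA₀} ω₀ - ω' t`, Barbalat's lemma
gives `g' t → 0`, and `A₀ ω t - ω' t = g' t - A₀ g t → 0`. Barbalat's lemma follows from the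
mean value inequality: if `d` is below the modulus of uniform continuity of `g'` for `ε`, then
`g (t + d) - g t` is within `ε d` of `d • g' t`, while `g (t + d) - g t → 0`. -/

open Matrix Filter NormedSpace Set Topology

open ContinuousLinearMap in
theorem norm_sub_sub_smul_le_of_norm_deriv_sub_le {E : Type*} [NormedAddCommGroup E]
    [NormedSpace ℝ E] {f f' : ℝ → E} {a b C : ℝ} (hab : a ≤ b)
    (hf : ∀ x ∈ Icc a b, HasDerivWithinAt f (f' x) (Icc a b) x)
    (bound : ∀ x ∈ Icc a b, ‖f' x - f' a‖ ≤ C) :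
    ‖f b - f a - (b - a) • f' a‖ ≤ C * (b - a) := by
  have hbound (x : ℝ) (hx : x ∈ Icc a b) :
      ‖toSpanSingleton ℝ (f' x) - toSpanSingleton ℝ (f' a)‖ ≤ C := by
    have hsub : toSpanSingleton ℝ (f' x) - toSpanSingleton ℝ (f' a) =
        toSpanSingleton ℝ (f' x - f' a) := by
      ext; simp
    simpa [hsub] using bound x hx
  simpa [abs_of_nonneg (sub_nonneg.2 hab)] using
    (convex_Icc a b).norm_image_sub_le_of_norm_hasFDerivWithin_le'
      (fun x hx => (hf x hx).hasFDerivWithinAt) hbound (left_mem_Icc.2 hab) (right_mem_Icc.2 hab)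

theorem hasDerivAt_exp_smul_mulVec {n : Type*} [Fintype n] [DecidableEq n]
    (A : Matrix n n ℝ) (v : n → ℝ) (t : ℝ) :
    HasDerivAt (fun u : ℝ => exp (u • A) *ᵥ v) (A *ᵥ (exp (t • A) *ᵥ v)) t := by
  -- any normed-algebra structure will do: `HasDerivAt` only sees the product topology
  let := Matrix.linftyOpNormedRing (n := n) (α := ℝ)
  let := Matrix.linftyOpNormedAlgebra (n := n) (R := ℝ) (α := ℝ)
  rw [mulVec_mulVec]
  exact
    (((mulVecBilin ℝ ℝ).flip v).toContinuousLinearMap.hasFDerivAt.comp_hasDerivAt t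
      (hasDerivAt_exp_smul_const' A t))

theorem tendsto_zero_of_hasDerivAt_of_uniformContinuousOn {E : Type*} [NormedAddCommGroup E]
    [NormedSpace ℝ E] {f f' : ℝ → E} {a : E} {c : ℝ} (hf : ∀ t ≥ c, HasDerivAt f (f' t) t)
    (hf' : UniformContinuousOn f' (Ici c)) (hlim : Tendsto f atTop (𝓝 a)) :
    Tendsto f' atTop (𝓝 0) := by
  rw [NormedAddGroup.tendsto_nhds_zero]
  intro ε hε
  obtain ⟨δ, hδ, hclose⟩ := Metric.uniformContinuousOn_iff.1 hf' (ε / 2) (by positivity)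
  obtain ⟨d, hd, hdδ⟩ := exists_between hδ
  have hincr : Tendsto (fun t => f (t + d) - f t) atTop (𝓝 0) := by
    simpa using (hlim.comp (tendsto_atTop_add_const_right _ d tendsto_id)).sub hlim
  filter_upwards [NormedAddGroup.tendsto_nhds_zero.1 hincr (d * ε / 2) (by positivity),
    eventually_ge_atTop c] with t hsmall ht
  have hmvt : ‖f (t + d) - f t - d • f' t‖ ≤ ε / 2 * d := by
    simpa using norm_sub_sub_smul_le_of_norm_deriv_sub_le (a := t) (b := t + d) (by linarith)
      (fun x hx => (hf x (ht.trans hx.1)).hasDerivWithinAt) fun x hx => by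
        rw [← dist_eq_norm]
        refine (hclose x (ht.trans hx.1) t ht ?_).le
        rw [Real.dist_eq, abs_lt]
        constructor <;> linarith [hx.1, hx.2]
  have : d * ‖f' t‖ < d * ε := calc
    d * ‖f' t‖ = ‖d • f' t‖ := by rw [norm_smul, Real.norm_of_nonneg hd.le]
    _ ≤ ‖f (t + d) - f t‖ + ‖f (t + d) - f t - d • f' t‖ := norm_le_norm_add_norm_sub _ _
    _ < d * ε / 2 + ε / 2 * d := add_lt_add_of_lt_of_le hsmall hmvt
    _ = d * ε := by ring
  exact lt_of_mul_lt_mul_left this hd.le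

theorem limit_A0omega_sub_deriv_general {q : ℕ}
    (A₀ : Matrix (Fin q) (Fin q) ℝ)
    (ω ω' : ℝ → (Fin q → ℝ)) (ω₀ : Fin q → ℝ)
    (hderiv : ∀ t : ℝ, HasDerivAt ω (ω' t) t)
    (hlim : Tendsto (fun t : ℝ => (exp (t • A₀)).mulVec ω₀ - ω t) atTop (nhds 0))
    (huc : UniformContinuousOn
      (fun t : ℝ => A₀.mulVec ((exp (t • A₀)).mulVec ω₀) - ω' t) (Set.Ici 0)) :
    Tendsto (fun t : ℝ => A₀.mulVec (ω t) - ω' t) atTop (nhds 0) := by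
  have hdiff : Tendsto (fun t => A₀ *ᵥ (exp (t • A₀) *ᵥ ω₀) - ω' t) atTop (nhds 0) :=
    tendsto_zero_of_hasDerivAt_of_uniformContinuousOn
      (fun t _ => (hasDerivAt_exp_smul_mulVec A₀ ω₀ t).sub (hderiv t)) huc hlim
  have hmul : Tendsto (fun t => A₀ *ᵥ (exp (t • A₀) *ᵥ ω₀ - ω t)) atTop (nhds 0) := by
    simpa [Function.comp_def] using
      ((continuous_const.matrix_mulVec continuous_id).tendsto 0).comp hlim
  simpa using (hdiff.sub hmul).congr fun t => by simp only [mulVec_sub]; abel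

/-- If `e^{A₀t}ω₀ − ω(t) → 0` and `t ↦ A₀e^{A₀t}ω₀ − ω̇(t)` is uniformly
continuous on `[0,∞)`, then `A₀ω(t) − ω̇(t) → 0`. -/
theorem limit_A0omega_sub_deriv {q : ℕ}
    (A₀ : Matrix (Fin q) (Fin q) ℝ)
    (ω ω' : ℝ → (Fin q → ℝ)) (ω₀ : Fin q → ℝ) (hω₀ : ω 0 = ω₀)
    (hderiv : ∀ t : ℝ, HasDerivAt ω (ω' t) t) (hcont : Continuous ω')
    (hlim : Tendsto (fun t : ℝ => (exp (t • A₀)).mulVec ω₀ - ω t) atTop (nhds 0))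
    (huc : UniformContinuousOn
      (fun t : ℝ => A₀.mulVec ((exp (t • A₀)).mulVec ω₀) - ω' t) (Set.Ici 0)) :
    Tendsto (fun t : ℝ => A₀.mulVec (ω t) - ω' t) atTop (nhds 0) :=
  limit_A0omega_sub_deriv_general A₀ ω ω' ω₀ hderiv hlim huc
end

section
/- Barbalat's lemma: if f : [0,∞) → ℝ is uniformly continuous and lim_{t→∞} ∫₀ᵗ f(s) ds exists and is finite, then lim_{t→∞} f(t) = 0. -/
/-!
Uniform continuity gives `δ > 0` such that `f` varies by at most `ε / 2` on every window
`[t, t + δ]`, so `δ (|f t| - ε / 2) ≤ |∫ₜ^{t+δ} f|`. The window integrals are differences of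
values of the convergent function `T ↦ ∫₀ᵀ f`, hence eventually smaller than `δ ε / 2`, which
forces `|f t| < ε`.
-/

open Filter Set Topology MeasureTheory

variable {E : Type*} [NormedAddCommGroup E] [NormedSpace ℝ E]

theorem tendsto_intervalIntegral_add_const_of_tendsto {f : ℝ → E} {a : ℝ} {L : E}
    (hf : ∀ᶠ t in atTop, IntervalIntegrable f volume a t)
    (hint : Tendsto (fun t => ∫ s in a..t, f s) atTop (𝓝 L)) (d : ℝ) :
    Tendsto (fun t => ∫ s in t..t + d, f s) atTop (𝓝 0) := by
  have hshift : Tendsto (fun t : ℝ => t + d) atTop atTop :=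
    tendsto_atTop_add_const_right _ d tendsto_id
  have hdiff := (hint.comp hshift).sub hint
  rw [sub_self] at hdiff
  refine hdiff.congr' ?_
  filter_upwards [hf, hshift.eventually hf] with t ht htd
  exact intervalIntegral.integral_interval_sub_left htd ht

theorem mul_sub_le_norm_intervalIntegral [CompleteSpace E] {f : ℝ → E} {a b c : ℝ}
    (hab : a ≤ b) (hf : IntervalIntegrable f volume a b)
    (hosc : ∀ s ∈ Ioc a b, ‖f s - f a‖ ≤ c) :
    (b - a) * (‖f a‖ - c) ≤ ‖∫ s in a..b, f s‖ := by
  have hsplit : ∫ s in a..b, f s = (∫ s in a..b, (f s - f a)) + (b - a) • f a := by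
    rw [intervalIntegral.integral_sub hf intervalIntegrable_const,
      intervalIntegral.integral_const, sub_add_cancel]
  have hdev : ‖∫ s in a..b, (f s - f a)‖ ≤ c * (b - a) := by
    rw [← abs_of_nonneg (sub_nonneg.2 hab)]
    exact intervalIntegral.norm_integral_le_of_norm_le_const (by rwa [uIoc_of_le hab])
  calc (b - a) * (‖f a‖ - c) = ‖(b - a) • f a‖ - c * (b - a) := by
        rw [norm_smul, Real.norm_of_nonneg (sub_nonneg.2 hab)]; ring
    _ ≤ ‖(b - a) • f a‖ - ‖∫ s in a..b, (f s - f a)‖ := by linarith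
    _ ≤ ‖∫ s in a..b, f s‖ := by
        rw [hsplit, add_comm]; exact norm_sub_le_norm_add _ _

/-- Barbalat's lemma: if `f : [0,∞) → ℝ` is uniformly continuous and
`∫₀ᵗ f` converges to a finite limit as `t → ∞`, then `f(t) → 0`. -/
theorem barbalat (f : ℝ → ℝ)
    (huc : UniformContinuousOn f (Set.Ici 0))
    (L : ℝ)
    (hint : Tendsto (fun t : ℝ => ∫ s in (0:ℝ)..t, f s) atTop (nhds L)) :
    Tendsto f atTop (nhds 0) := by
  have hintegrable {a b : ℝ} (ha : 0 ≤ a) (hab : a ≤ b) : IntervalIntegrable f volume a b :=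
    ContinuousOn.intervalIntegrable_of_Icc hab
      (huc.continuousOn.mono ((Icc_subset_Ici_iff hab).2 ha))
  rw [Metric.tendsto_atTop]
  intro ε hε
  obtain ⟨δ, hδ, hclose⟩ := Metric.uniformContinuousOn_iff_le.mp huc (ε / 2) (half_pos hε)
  have hwindow := tendsto_intervalIntegral_add_const_of_tendsto
    ((eventually_ge_atTop 0).mono fun t ht => hintegrable le_rfl ht) hint δ
  obtain ⟨N, hN⟩ := eventually_atTop.mp <| (eventually_ge_atTop 0).and <|
    hwindow.eventually (Metric.ball_mem_nhds 0 (mul_pos hδ (half_pos hε)))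
  refine ⟨N, fun t ht => ?_⟩
  obtain ⟨ht0, hsmall⟩ := hN t ht
  have hlow := mul_sub_le_norm_intervalIntegral (b := t + δ) (by linarith)
    (hintegrable ht0 (by linarith)) fun s hs => by
      rw [← dist_eq_norm]
      refine hclose s (ht0.trans hs.1.le) t ht0 ?_
      rw [Real.dist_eq, abs_of_pos (sub_pos.2 hs.1)]
      linarith [hs.2]
  rw [dist_zero_right] at hsmall ⊢
  rw [add_sub_cancel_left] at hlow
  have := lt_of_mul_lt_mul_left (hlow.trans_lt hsmall) hδ.le
  linarith
end

section
/- Let A_η = [[A, BK₁, BK₂]; [HC_m, A+BK₁−HC_m, BK₂]; [G₂WC, G₂WDK₁, G₁+G₂WDK₂]], where all blocks are real matrices of compatible sizes. Then A_η is similar to the upper block-triangular matrix [[A+BK₁, BK₂, BK₁]; [G₂W(C+DK₁), G₁+G₂WDK₂, G₂WDK₁]; [0, 0, A−HC_m]], and consequently σ(A_η) = σ(A_g) ∪ σ(A−HC_m), where A_g = [[A+BK₁, BK₂]; [G₂W(C+DK₁), G₁+G₂WDK₂]]. In particular, A_η is Hurwitz if and only if both A_g and A−HC_m are Hurwitz.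 -/
open Matrix

lemma mem_spectrum_iff_det {c : Type*} [Fintype c] [DecidableEq c] (μ : ℂ) (M : Matrix c c ℂ) :
    μ ∈ spectrum ℂ M ↔ (μ • (1 : Matrix c c ℂ) - M).det = 0 := by
  rw [spectrum.mem_iff, Algebra.algebraMap_eq_smul_one, Matrix.isUnit_iff_isUnit_det,
    isUnit_iff_ne_zero, not_not]

lemma spectrum_fromBlocks_zero₂₁ {a b : Type*} [Fintype a] [Fintype b]
    [DecidableEq a] [DecidableEq b]
    (P : Matrix a a ℂ) (Q : Matrix a b ℂ) (R : Matrix b b ℂ) :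
    spectrum ℂ (Matrix.fromBlocks P Q 0 R) = spectrum ℂ P ∪ spectrum ℂ R := by
  ext μ
  rw [Set.mem_union, mem_spectrum_iff_det μ (Matrix.fromBlocks P Q 0 R),
    mem_spectrum_iff_det μ P, mem_spectrum_iff_det μ R]
  have h1 : μ • (1 : Matrix (a ⊕ b) (a ⊕ b) ℂ) - Matrix.fromBlocks P Q 0 R =
      Matrix.fromBlocks (μ • 1 - P) (-Q) 0 (μ • 1 - R) := by
    ext (i | i) (j | j) <;>
      simp [Matrix.sub_apply, Matrix.smul_apply, Matrix.one_apply, Sum.elim_inl, Sum.elim_inr]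
  rw [h1, Matrix.det_fromBlocks_zero₂₁, mul_eq_zero]


/-- The closed-loop matrix `A_η` of the observer-based control scheme is
similar to an upper block-triangular matrix with diagonal blocks `A_g` and `A − HC_m`;
hence `σ(A_η) = σ(A_g) ∪ σ(A − HC_m)`, and `A_η` is Hurwitz iff both `A_g` and
`A − HC_m` are Hurwitz. -/
theorem Aeta_similarity_and_spectrum {n m z p pm : ℕ}
    (A : Matrix (Fin n) (Fin n) ℝ) (B : Matrix (Fin n) (Fin m) ℝ)
    (K₁ : Matrix (Fin m) (Fin n) ℝ) (K₂ : Matrix (Fin m) (Fin z) ℝ)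
    (C : Matrix (Fin p) (Fin n) ℝ) (D : Matrix (Fin p) (Fin m) ℝ)
    (Cm : Matrix (Fin pm) (Fin n) ℝ) (H : Matrix (Fin n) (Fin pm) ℝ)
    (G₁ : Matrix (Fin z) (Fin z) ℝ) (G₂ : Matrix (Fin z) (Fin p) ℝ)
    (W : Matrix (Fin p) (Fin p) ℝ)
    (Aη : Matrix ((Fin n ⊕ Fin n) ⊕ Fin z) ((Fin n ⊕ Fin n) ⊕ Fin z) ℝ)
    (hAη : Aη = Matrix.fromBlocks
      (Matrix.fromBlocks A (B * K₁) (H * Cm) (A + B * K₁ - H * Cm))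
      (Matrix.fromRows (B * K₂) (B * K₂))
      (Matrix.fromCols (G₂ * W * C) (G₂ * W * D * K₁))
      (G₁ + G₂ * W * D * K₂))
    (Ag : Matrix (Fin n ⊕ Fin z) (Fin n ⊕ Fin z) ℝ)
    (hAg : Ag = Matrix.fromBlocks (A + B * K₁) (B * K₂)
      (G₂ * W * (C + D * K₁)) (G₁ + G₂ * W * D * K₂))
    (T : Matrix ((Fin n ⊕ Fin z) ⊕ Fin n) ((Fin n ⊕ Fin z) ⊕ Fin n) ℝ)
    (hT : T = Matrix.fromBlocks Ag (Matrix.fromRows (B * K₁) (G₂ * W * D * K₁))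
      0 (A - H * Cm))
    (e : ((Fin n ⊕ Fin n) ⊕ Fin z) ≃ ((Fin n ⊕ Fin z) ⊕ Fin n))
    (he : e = (Equiv.sumAssoc (Fin n) (Fin n) (Fin z)).trans
      ((Equiv.sumCongr (Equiv.refl (Fin n)) (Equiv.sumComm (Fin n) (Fin z))).trans
        (Equiv.sumAssoc (Fin n) (Fin z) (Fin n)).symm)) :
    (∃ S : Matrix ((Fin n ⊕ Fin n) ⊕ Fin z) ((Fin n ⊕ Fin n) ⊕ Fin z) ℝ,
      IsUnit S.det ∧ S * Aη * S⁻¹ = Matrix.reindex e.symm e.symm T) ∧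
    spectrum ℂ (Aη.map (fun x : ℝ => (x : ℂ))) =
      spectrum ℂ (Ag.map (fun x : ℝ => (x : ℂ))) ∪
        spectrum ℂ ((A - H * Cm).map (fun x : ℝ => (x : ℂ))) ∧
    ((∀ μ ∈ spectrum ℂ (Aη.map (fun x : ℝ => (x : ℂ))), μ.re < 0) ↔
      ((∀ μ ∈ spectrum ℂ (Ag.map (fun x : ℝ => (x : ℂ))), μ.re < 0) ∧
       (∀ μ ∈ spectrum ℂ ((A - H * Cm).map (fun x : ℝ => (x : ℂ))), μ.re < 0))) := by
  subst hAg hT he hAη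
  set S : Matrix ((Fin n ⊕ Fin n) ⊕ Fin z) ((Fin n ⊕ Fin n) ⊕ Fin z) ℝ :=
    Matrix.fromBlocks (Matrix.fromBlocks 1 0 (-1) 1) 0 0 1 with hS
  set S' : Matrix ((Fin n ⊕ Fin n) ⊕ Fin z) ((Fin n ⊕ Fin n) ⊕ Fin z) ℝ :=
    Matrix.fromBlocks (Matrix.fromBlocks 1 0 1 1) 0 0 1 with hS'
  have hSS' : S * S' = 1 := by
    simp [hS, hS', Matrix.fromBlocks_multiply, ← Matrix.fromBlocks_one]
  have hS'S : S' * S = 1 := by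
    simp [hS, hS', Matrix.fromBlocks_multiply, ← Matrix.fromBlocks_one]
  have hdet : IsUnit S.det := by
    have h := congrArg Matrix.det hSS'
    rw [Matrix.det_mul, Matrix.det_one] at h
    exact IsUnit.of_mul_eq_one _ h
  have hinv : S⁻¹ = S' := Matrix.inv_eq_right_inv hSS'
  set Aexp := Matrix.fromBlocks
      (Matrix.fromBlocks A (B * K₁) (H * Cm) (A + B * K₁ - H * Cm))
      (Matrix.fromRows (B * K₂) (B * K₂))
      (Matrix.fromCols (G₂ * W * C) (G₂ * W * D * K₁))
      (G₁ + G₂ * W * D * K₂) with hAexp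
  set E : ((Fin n ⊕ Fin n) ⊕ Fin z) ≃ ((Fin n ⊕ Fin z) ⊕ Fin n) :=
    (Equiv.sumAssoc (Fin n) (Fin n) (Fin z)).trans
      ((Equiv.sumCongr (Equiv.refl (Fin n)) (Equiv.sumComm (Fin n) (Fin z))).trans
        (Equiv.sumAssoc (Fin n) (Fin z) (Fin n)).symm) with hE
  set Agx := Matrix.fromBlocks (A + B * K₁) (B * K₂)
      (G₂ * W * (C + D * K₁)) (G₁ + G₂ * W * D * K₂) with hAgx
  set Tm := Matrix.fromBlocks Agx (Matrix.fromRows (B * K₁) (G₂ * W * D * K₁))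
      0 (A - H * Cm) with hTm
  set Rexp := Matrix.fromBlocks
      (Matrix.fromBlocks (A + B * K₁) (B * K₁) 0 (A - H * Cm))
      (Matrix.fromRows (B * K₂) 0)
      (Matrix.fromCols (G₂ * W * (C + D * K₁)) (G₂ * W * D * K₁))
      (G₁ + G₂ * W * D * K₂) with hRexp
  have key : S * Aexp * S' = Rexp := by
    rw [hAexp, hRexp]
    simp only [hS, hS', Matrix.fromBlocks_multiply, Matrix.fromBlocks_mul_fromRows,
      Matrix.fromCols_mul_fromBlocks, Matrix.zero_mul, Matrix.mul_zero,
      Matrix.mul_one, Matrix.one_mul, add_zero, zero_add, neg_one_mul, neg_mul,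
      Matrix.neg_mul]
    rw [Matrix.mul_add, ← Matrix.mul_assoc]
    abel_nf
  have hre : Matrix.reindex E.symm E.symm Tm = Rexp := by
    rw [hTm, hAgx, hRexp, hE]
    ext i j
    rcases i with (i | i) | i <;> rcases j with (j | j) | j <;>
      simp [Matrix.reindex_apply, Matrix.submatrix_apply]
  have hAeq : Aexp = S' * Rexp * S := by
    rw [← key]
    have h3 : ∀ X : Matrix ((Fin n ⊕ Fin n) ⊕ Fin z) ((Fin n ⊕ Fin n) ⊕ Fin z) ℝ,
        S' * (S * X * S') * S = (S' * S) * X * (S' * S) := by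
      intro X; simp only [Matrix.mul_assoc]
    rw [h3, hS'S, Matrix.one_mul, Matrix.mul_one]
  have hfun : (fun x : ℝ => (x : ℂ)) = ⇑(algebraMap ℝ ℂ) := rfl
  set f : ℝ →+* ℂ := algebraMap ℝ ℂ with hf
  have hmap_mul : ∀ {k l o : Type} [Fintype l] (X : Matrix k l ℝ) (Y : Matrix l o ℝ),
      (X * Y).map ⇑f = X.map ⇑f * Y.map ⇑f := by
    intro k l o _ X Y; exact Matrix.map_mul
  have hu1 : (S'.map ⇑f) * (S.map ⇑f) = 1 := by
    rw [← hmap_mul, hS'S, Matrix.map_one ⇑f (map_zero f) (map_one f)]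
  have hu2 : (S.map ⇑f) * (S'.map ⇑f) = 1 := by
    rw [← hmap_mul, hSS', Matrix.map_one ⇑f (map_zero f) (map_one f)]
  set u : (Matrix ((Fin n ⊕ Fin n) ⊕ Fin z) ((Fin n ⊕ Fin n) ⊕ Fin z) ℂ)ˣ :=
    ⟨S'.map ⇑f, S.map ⇑f, hu1, hu2⟩ with hu
  have hspec : spectrum ℂ (Aexp.map (fun x : ℝ => (x : ℂ))) =
      spectrum ℂ (Agx.map (fun x : ℝ => (x : ℂ))) ∪
        spectrum ℂ ((A - H * Cm).map (fun x : ℝ => (x : ℂ))) := by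
    rw [hfun, hAeq, hmap_mul, hmap_mul, ← hre]
    have step1 : spectrum ℂ ((S'.map ⇑f) *
        ((Matrix.reindex E.symm E.symm Tm).map ⇑f) * (S.map ⇑f)) =
        spectrum ℂ ((Matrix.reindex E.symm E.symm Tm).map ⇑f) :=
      spectrum.units_conjugate (u := u)
    rw [step1]
    have hrm : (Matrix.reindex E.symm E.symm Tm).map ⇑f =
        Matrix.reindex E.symm E.symm (Tm.map ⇑f) := by
      simp [Matrix.reindex_apply, Matrix.submatrix_map]
    have halg : Matrix.reindex E.symm E.symm (Tm.map ⇑f) =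
        Matrix.reindexAlgEquiv ℂ ℂ E.symm (Tm.map ⇑f) := rfl
    rw [hrm, halg, AlgEquiv.spectrum_eq, hTm, Matrix.fromBlocks_map,
      show (0 : Matrix (Fin n) (Fin n ⊕ Fin z) ℝ).map ⇑f = 0 from
        Matrix.map_zero ⇑f (map_zero f)]
    exact spectrum_fromBlocks_zero₂₁ _ _ _
  refine ⟨⟨S, hdet, ?_⟩, hspec, ?_⟩
  · rw [hinv, key]; exact hre.symm
  · rw [hspec]
    constructor
    · intro h
      exact ⟨fun μ hμ => h μ (Set.mem_union_left _ hμ),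
        fun μ hμ => h μ (Set.mem_union_right _ hμ)⟩
    · rintro ⟨h1, h2⟩ μ hμ
      rcases hμ with hμ | hμ
      · exact h1 μ hμ
      · exact h2 μ hμ
end
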